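/- Let R be a Dedekind domain with fraction field K, A a semisimple K-algebra, and Λ an R-order of A. Every minimal overorder Γ of Λ with [Γ : Λ] a power of the prime 𝔭 satisfies Γ ⊆ 𝔭⁻¹Λ. -/

import Mathlib

/-- An `R`-order of the `K`-algebra `A`: a subring of `A` (closed under the `R`-action)
that is a finitely generated projective `R`-module and contains a `K`-basis of `A`. -/
def IsOrder {R A : Type*} (K : Type*) [CommRing R] [Field K] [Algebra R K] [Ring A]
    [Algebra K A] [Algebra R A] [IsScalarTower R K A] (Λ : Subalgebra R A) : Prop :=
  Module.Finite R Λ ∧ Module.Projective R Λ ∧ Submodule.span K (Λ : Set A) = ⊤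

/-!
`Λ + 𝔭Γ` is a subring lying between `Λ` and `Γ`; it is finitely generated and torsion-free,
hence projective over the Dedekind domain `R`, so it is an order and minimality makes it
`Λ` or `Γ`. In the first case `𝔭Γ ⊆ Λ`. In the second, `Γ = Λ + 𝔭Γ` iterates to
`Γ = Λ + 𝔭ⁿΓ` for every `n`, while `𝔭ⁿΓ ⊆ Λ` for large `n` because `Γ` is finitely generated
and `Γ/Λ` is `𝔭`-power torsion; so `Γ = Λ`, a contradiction.
-/

namespace Submodule

variable {R M : Type*} [CommRing R] [AddCommGroup M] [Module R M] {I : Ideal R}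
  {N P : Submodule R M}

theorem le_sup_pow_smul_of_le_sup_smul (h : P ≤ N ⊔ I • P) (n : ℕ) : P ≤ N ⊔ I ^ n • P := by
  induction n with
  | zero => simp
  | succ n ih =>
    calc P ≤ N ⊔ I ^ n • P := ih
      _ ≤ N ⊔ I ^ n • (N ⊔ I • P) := sup_le_sup_left (smul_mono_right _ h) _
      _ = N ⊔ I ^ n • N ⊔ I ^ (n + 1) • P := by
        rw [smul_sup, smul_smul, ← pow_succ, sup_assoc]
      _ ≤ N ⊔ I ^ (n + 1) • P := sup_le_sup_right (sup_le le_rfl smul_le_right) _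

theorem exists_pow_smul_le_of_fg (hP : P.FG) (h : ∀ x ∈ P, ∃ k : ℕ, ∀ a ∈ I ^ k, a • x ∈ N) :
    ∃ n : ℕ, I ^ n • P ≤ N := by
  induction P, hP using fg_induction with
  | singleton x =>
    obtain ⟨k, hk⟩ := h x (mem_span_singleton_self x)
    refine ⟨k, smul_le.mpr fun a ha y hy => ?_⟩
    obtain ⟨r, rfl⟩ := mem_span_singleton.mp hy
    rw [smul_comm a r x]
    exact N.smul_mem r (hk a ha)
  | sup P₁ P₂ _ _ ih₁ ih₂ =>
    obtain ⟨n₁, hn₁⟩ := ih₁ fun x hx => h x (mem_sup_left hx)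
    obtain ⟨n₂, hn₂⟩ := ih₂ fun x hx => h x (mem_sup_right hx)
    refine ⟨max n₁ n₂, ?_⟩
    rw [smul_sup]
    refine sup_le ?_ ?_
    · exact (smul_mono_left (Ideal.pow_le_pow_right (le_max_left _ _))).trans hn₁
    · exact (smul_mono_left (Ideal.pow_le_pow_right (le_max_right _ _))).trans hn₂

theorem le_of_le_sup_smul_of_fg (hP : P.FG) (h : P ≤ N ⊔ I • P)
    (htors : ∀ x ∈ P, ∃ k : ℕ, ∀ a ∈ I ^ k, a • x ∈ N) : P ≤ N := by
  obtain ⟨n, hn⟩ := exists_pow_smul_le_of_fg hP htors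
  exact (le_sup_pow_smul_of_le_sup_smul h n).trans (sup_le le_rfl hn)

end Submodule

theorem Module.projective_of_isTorsionFree {R M : Type*} [CommRing R] [IsDedekindDomain R]
    [AddCommGroup M] [Module R M] [Module.Finite R M] [Module.IsTorsionFree R M] :
    Module.Projective R M :=
  have := Module.finitePresentation_of_finite R M
  Module.Flat.projective_of_finitePresentation

namespace Subalgebra

variable {R A : Type*} [CommRing R] [Ring A] [Algebra R A]

theorem mul_mem_smul_toSubmodule_left {Γ : Subalgebra R A} {I : Ideal R} {x y : A}
    (hx : x ∈ Γ) (hy : y ∈ I • toSubmodule Γ) : x * y ∈ I • toSubmodule Γ := by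
  refine Submodule.smul_induction_on hy (fun a ha z hz => ?_) fun y z hy hz => ?_
  · rw [mul_smul_comm]
    exact Submodule.smul_mem_smul ha (Γ.mul_mem hx hz)
  · rw [mul_add]
    exact add_mem hy hz

theorem mul_mem_smul_toSubmodule_right {Γ : Subalgebra R A} {I : Ideal R} {x y : A}
    (hx : x ∈ I • toSubmodule Γ) (hy : y ∈ Γ) : x * y ∈ I • toSubmodule Γ := by
  refine Submodule.smul_induction_on hx (fun a ha z hz => ?_) fun x z hx hz => ?_
  · rw [smul_mul_assoc]
    exact Submodule.smul_mem_smul ha (Γ.mul_mem hz hy)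
  · rw [add_mul]
    exact add_mem hx hz

theorem sup_smul_toSubmodule_le {Λ Γ : Subalgebra R A} (hle : Λ ≤ Γ) (I : Ideal R) :
    toSubmodule Λ ⊔ I • toSubmodule Γ ≤ toSubmodule Γ :=
  sup_le hle Submodule.smul_le_right

def supIdealSMul {Λ Γ : Subalgebra R A} (hle : Λ ≤ Γ) (I : Ideal R) : Subalgebra R A :=
  (toSubmodule Λ ⊔ I • toSubmodule Γ).toSubalgebra (Submodule.mem_sup_left Λ.one_mem)
    fun x y hx hy => by
      obtain ⟨l, hl, p, hp, rfl⟩ := Submodule.mem_sup.mp hx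
      obtain ⟨l', hl', p', hp', rfl⟩ := Submodule.mem_sup.mp hy
      have hyΓ : l' + p' ∈ Γ := sup_smul_toSubmodule_le hle I hy
      rw [add_mul, mul_add]
      exact add_mem (add_mem (Submodule.mem_sup_left (Λ.mul_mem hl hl'))
        (Submodule.mem_sup_right (mul_mem_smul_toSubmodule_left (hle hl) hp')))
        (Submodule.mem_sup_right (mul_mem_smul_toSubmodule_right hp hyΓ))

theorem toSubmodule_supIdealSMul {Λ Γ : Subalgebra R A} (hle : Λ ≤ Γ) (I : Ideal R) :
    toSubmodule (supIdealSMul hle I) = toSubmodule Λ ⊔ I • toSubmodule Γ :=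
  rfl

theorem le_supIdealSMul {Λ Γ : Subalgebra R A} (hle : Λ ≤ Γ) (I : Ideal R) :
    Λ ≤ supIdealSMul hle I :=
  toSubmodule.le_iff_le.mp le_sup_left

theorem supIdealSMul_le {Λ Γ : Subalgebra R A} (hle : Λ ≤ Γ) (I : Ideal R) :
    supIdealSMul hle I ≤ Γ :=
  toSubmodule.le_iff_le.mp (sup_smul_toSubmodule_le hle I)

end Subalgebra

section Orders

variable {R K A : Type*} [CommRing R] [IsDedekindDomain R] [Field K] [Algebra R K] [Ring A]
  [Algebra K A] [Algebra R A] [IsScalarTower R K A]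

theorem IsOrder.of_le_of_le {Λ Λ' Γ : Subalgebra R A} (hΛ : IsOrder K Λ) (hΓ : IsOrder K Γ)
    (hΛΛ' : Λ ≤ Λ') (hΛ'Γ : Λ' ≤ Γ) : IsOrder K Λ' := by
  obtain ⟨hΓfin, hΓproj, -⟩ := hΓ
  have hinj : Function.Injective (Subalgebra.inclusion hΛ'Γ) := Subalgebra.inclusion_injective _
  have hfin : Module.Finite R Λ' :=
    Module.Finite.of_injective (Subalgebra.inclusion hΛ'Γ).toLinearMap hinj
  have : Module.IsTorsionFree R Λ' := hinj.moduleIsTorsionFree _ fun _ _ => rfl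
  refine ⟨hfin, Module.projective_of_isTorsionFree, eq_top_iff.mpr ?_⟩
  exact hΛ.2.2.ge.trans (Submodule.span_mono hΛΛ')

end Orders

theorem statement7 {R K A : Type*} [CommRing R] [IsDedekindDomain R] [Field K]
    [Algebra R K] [Ring A] [Algebra K A] [Algebra R A]
    [IsScalarTower R K A]
    (Λ Γ : Subalgebra R A) (hΛ : IsOrder K Λ) (hΓ : IsOrder K Γ) (hlt : Λ < Γ)
    (hmin : ∀ Λ' : Subalgebra R A, IsOrder K Λ' → Λ ≤ Λ' → Λ' ≤ Γ → Λ' = Λ ∨ Λ' = Γ)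
    (𝔭 : Ideal R)
    (hpow : ∀ x ∈ Γ, ∃ k : ℕ, ∀ a ∈ 𝔭 ^ k, a • x ∈ Λ) :
    ∀ x ∈ Γ, ∀ a ∈ 𝔭, a • x ∈ Λ := by
  set Λ' := Subalgebra.supIdealSMul hlt.le 𝔭 with hΛ'
  have hΛΛ' : Λ ≤ Λ' := Subalgebra.le_supIdealSMul hlt.le 𝔭
  have hΛ'Γ : Λ' ≤ Γ := Subalgebra.supIdealSMul_le hlt.le 𝔭
  rcases hmin Λ' (hΛ.of_le_of_le hΓ hΛΛ' hΛ'Γ) hΛΛ' hΛ'Γ with hΛ'_eq | hΛ'_eq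
  · intro x hx a ha
    rw [← hΛ'_eq]
    exact Submodule.mem_sup_right (Submodule.smul_mem_smul ha hx)
  · have hΓ_le : Subalgebra.toSubmodule Γ ≤
        Subalgebra.toSubmodule Λ ⊔ 𝔭 • Subalgebra.toSubmodule Γ := by
      rw [← Subalgebra.toSubmodule_supIdealSMul hlt.le, ← hΛ', hΛ'_eq]
    have hΓΛ : Γ ≤ Λ := Subalgebra.toSubmodule.le_iff_le.mp <|
      Submodule.le_of_le_sup_smul_of_fg (Module.Finite.iff_fg.mp hΓ.1) hΓ_le hpow
    exact absurd hΓΛ hlt.not_ge
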